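/- arXiv:2505.00513 — 2 statements merged into one kernel-verified Lean document; each statement's English description precedes it below -/
import Mathlib

section
/- Let k be a commutative ring, G a group, H ≤ G a subgroup of finite index, and M a kG-module. If M has finite projective dimension over kG and the restriction of M to kH is projective, then M is projective as a kG-module. -/
open CategoryTheory Limits

noncomputable section

/-- `projDimLE R n M` means that the `R`-module `M` has projective dimension at most `n`. -/
def projDimLE (R : Type) [Ring R] : ℕ → ModuleCat R → Prop
  | 0, M => Projective M
  | (n+1), M => ∃ (P : ModuleCat R) (f : P ⟶ M), Projective P ∧ Function.Surjective f ∧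
      projDimLE R n (ModuleCat.of R (LinearMap.ker f.hom))

/-- The inclusion of group algebras `kH → kG` induced by the inclusion of a subgroup `H ≤ G`. -/
def grpAlgInc (k : Type) [CommRing k] (G : Type) [Group G] (H : Subgroup G) :
    MonoidAlgebra k H →+* MonoidAlgebra k G :=
  MonoidAlgebra.mapDomainRingHom k H.subtype

/-!
Restriction `F` from `kG`-modules to `kH`-modules has coinduction `R` as a right adjoint and,
since `[G : H]` is finite (coinduction is then isomorphic to induction), also as a left adjoint.
Hence `F` is exact and preserves projectives, and a projective `kG`-module `K` is a retract of
`R (F K)`, which is injective relative to monomorphisms that split after restriction.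

Take `0 → K → P → M → 0` with `P` projective and `K` of smaller projective dimension. Restricted
to `kH` it splits because `F M` is projective, so `F K` is projective and by induction `K` is
projective. Then `K → P` splits over `kG` as well, and `M` is a direct summand of `P`.
-/

namespace CategoryTheory

variable {C D : Type*} [Category C] [Category D] {F : C ⥤ D} {R : D ⥤ C}

/-- `K` is a retract of `R (F K)` through the counit of `R ⊣ F`, and `F ⊣ R` extends maps into
`R (F K)` along monomorphisms that split after applying `F`. -/
theorem Adjunction.isSplitMono_of_isSplitMono_map (adj₁ : F ⊣ R) (adj₂ : R ⊣ F) [F.Faithful]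
    {K P : C} [Projective K] (i : K ⟶ P) [IsSplitMono (F.map i)] : IsSplitMono i := by
  let s : K ⟶ R.obj (F.obj K) := Projective.factorThru (𝟙 K) (adj₂.counit.app K)
  let j : P ⟶ R.obj (F.obj K) :=
    adj₁.homEquiv _ _ (retraction (F.map i) ≫ (adj₁.homEquiv _ _).symm s)
  have hij : i ≫ j = s := by
    rw [← adj₁.homEquiv_naturality_left, IsSplitMono.id_assoc, Equiv.apply_symm_apply]
  exact IsSplitMono.mk' ⟨j ≫ adj₂.counit.app K, by
    rw [← Category.assoc, hij, Projective.factorThru_comp]⟩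

namespace ShortComplex.ShortExact

variable [Abelian C] [Abelian D] {S : ShortComplex C}

theorem isSplitMono_map_f (adj₁ : F ⊣ R) (adj₂ : R ⊣ F) (hS : S.ShortExact)
    [Projective (F.obj S.X₃)] : IsSplitMono (F.map S.f) := by
  have := adj₁.isLeftAdjoint
  have := adj₂.isRightAdjoint
  have : Projective (S.map F).X₃ := ‹Projective (F.obj S.X₃)›
  exact (hS.map_of_exact F).splittingOfProjective.isSplitMono_f

theorem projective_map_X₁ (adj₁ : F ⊣ R) (adj₂ : R ⊣ F) (hS : S.ShortExact)
    [Projective S.X₂] [Projective (F.obj S.X₃)] : Projective (F.obj S.X₁) := by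
  have := adj₂.isLeftAdjoint
  have : Projective (F.obj S.X₂) := adj₁.map_projective _ inferInstance
  have := hS.isSplitMono_map_f adj₁ adj₂
  exact Retract.projective ⟨F.map S.f, retraction _, IsSplitMono.id _⟩

theorem projective_X₃_of_projective_map_X₃ (adj₁ : F ⊣ R) (adj₂ : R ⊣ F) [F.Faithful]
    (hS : S.ShortExact) [Projective S.X₁] [Projective S.X₂] [Projective (F.obj S.X₃)] :
    Projective S.X₃ := by
  have := hS.isSplitMono_map_f adj₁ adj₂
  have := adj₁.isSplitMono_of_isSplitMono_map adj₂ S.f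
  let σ := Splitting.ofExactOfRetraction S hS.exact (retraction S.f) (by simp) hS.epi_g
  exact Retract.projective ⟨σ.s, S.g, σ.s_g⟩

end ShortComplex.ShortExact

end CategoryTheory

theorem projective_of_projDimLE_of_projective_obj {R₁ R₂ : Type} [Ring R₁] [Ring R₂]
    {F : ModuleCat R₁ ⥤ ModuleCat R₂} {R : ModuleCat R₂ ⥤ ModuleCat R₁}
    (adj₁ : F ⊣ R) (adj₂ : R ⊣ F) [F.Faithful] {n : ℕ} {M : ModuleCat R₁}
    (hM : projDimLE R₁ n M) (hFM : Projective (F.obj M)) : Projective M := by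
  induction n generalizing M with
  | zero => exact hM
  | succ n ih =>
    obtain ⟨P, f, hP, hf, hK⟩ := hM
    have hS := LinearMap.shortExact_shortComplexKer (f := f.hom) hf
    have := ih hK (hS.projective_map_X₁ adj₁ adj₂)
    exact hS.projective_X₃_of_projective_map_X₃ adj₁ adj₂

theorem Representation.asAlgebraHom_comp {k G G' V : Type*} [CommSemiring k] [Monoid G]
    [Monoid G'] [AddCommMonoid V] [Module k V] (ρ : Representation k G V) (f : G' →* G) :
    Representation.asAlgebraHom (ρ.comp f) =
      ρ.asAlgebraHom.comp (MonoidAlgebra.mapDomainAlgHom k k f) := by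
  ext
  simp

namespace Rep

section Res

variable {k G G' : Type*} [CommRing k] [Monoid G] [Monoid G'] (f : G' →* G)

def toModuleMonoidAlgebraCompRestrictScalarsIso :
    toModuleMonoidAlgebra ⋙ ModuleCat.restrictScalars (MonoidAlgebra.mapDomainRingHom k f) ≅
      resFunctor f ⋙ toModuleMonoidAlgebra :=
  -- The source module structure is passed explicitly: instance search does not unfold the
  -- carrier of `restrictScalars`.
  NatIso.ofComponents (fun V => LinearEquiv.toModuleIso <|
    @AddEquiv.toLinearEquiv _ _ _ _ _ _
      ((ModuleCat.restrictScalars (MonoidAlgebra.mapDomainRingHom k f)).obj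
        (toModuleMonoidAlgebra.obj V)).isModule
      _ (AddEquiv.refl V) fun r v =>
        (LinearMap.congr_fun (AlgHom.congr_fun (V.ρ.asAlgebraHom_comp f) r) v).symm)
    fun _ => rfl

def restrictScalarsMapDomainIso :
    ModuleCat.restrictScalars (MonoidAlgebra.mapDomainRingHom k f) ≅
      equivalenceModuleMonoidAlgebra.inverse ⋙ resFunctor f ⋙
        equivalenceModuleMonoidAlgebra.functor :=
  (Functor.leftUnitor _).symm ≪≫
    Functor.isoWhiskerRight equivalenceModuleMonoidAlgebra.counitIso.symm _ ≪≫
    Functor.isoWhiskerLeft _ (toModuleMonoidAlgebraCompRestrictScalarsIso f)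

end Res

section Subgroup

variable (k : Type) {G : Type} [CommRing k] [Group G] (H : Subgroup G)

def coindModuleCat : ModuleCat (MonoidAlgebra k H) ⥤ ModuleCat (MonoidAlgebra k G) :=
  equivalenceModuleMonoidAlgebra.inverse ⋙ coindFunctor k H.subtype ⋙
    equivalenceModuleMonoidAlgebra.functor

def restrictScalarsCoindAdjunction :
    ModuleCat.restrictScalars (MonoidAlgebra.mapDomainRingHom k H.subtype) ⊣
      coindModuleCat k H :=
  Adjunction.ofNatIsoLeft (equivalenceModuleMonoidAlgebra.symm.toAdjunction.comp
    ((resCoindAdjunction k H.subtype).comp equivalenceModuleMonoidAlgebra.toAdjunction))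
    (restrictScalarsMapDomainIso H.subtype).symm

open Classical in
def coindRestrictScalarsAdjunction [H.FiniteIndex] :
    coindModuleCat k H ⊣
      ModuleCat.restrictScalars (MonoidAlgebra.mapDomainRingHom k H.subtype) :=
  Adjunction.ofNatIsoRight (equivalenceModuleMonoidAlgebra.symm.toAdjunction.comp
    ((coindResAdjunction k H).comp equivalenceModuleMonoidAlgebra.toAdjunction))
    (restrictScalarsMapDomainIso H.subtype).symm

end Subgroup

end Rep

/-- If `H ≤ G` has finite index and a `kG`-module `M` has finite projective dimension over `kG`
while its restriction to `kH` is projective, then `M` is projective over `kG`. -/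
theorem statement1 (k : Type) [CommRing k] (G : Type) [Group G] (H : Subgroup G)
    [H.FiniteIndex] (M : ModuleCat (MonoidAlgebra k G)) (n : ℕ)
    (hfin : projDimLE (MonoidAlgebra k G) n M)
    (hres : Projective ((ModuleCat.restrictScalars (grpAlgInc k G H)).obj M)) :
    Projective M :=
  projective_of_projDimLE_of_projective_obj (Rep.restrictScalarsCoindAdjunction k H)
    (Rep.coindRestrictScalarsAdjunction k H) hfin hres

end
end

section
/- Let k be a commutative ring, G a group, and M a kG-module. Suppose that for every finitely generated subgroup S' ≤ G, the restriction res_{S'}^G M is a flat kS'-module. Then M is a flat kG-module. -/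
/-! By Baer's criterion, the character module `M⋆` is injective over `kGᵐᵒᵖ` as soon as every
`f : I → M⋆` on a right ideal `I` has the form `f x m = c (x m)` for a character `c` of `M`. Such a
`c` exists iff `f` respects every finite relation `∑ xᵢ mᵢ = 0` (extend the character induced on
`I M ⊆ M`, using that `ℚ/ℤ` is divisible). The `xᵢ` of one relation all lie in `kS'` for the
finitely generated subgroup `S'` spanned by their supports, and injectivity of `M⋆` over `kS'ᵐᵒᵖ`
gives a character `c` that works for all of them at once. -/

open CategoryTheory Limits

noncomputable section

/-- The right `R`-module (i.e. `Rᵐᵒᵖ`-module) structure on the character module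
`Hom_ℤ(M, ℚ/ℤ)` of a left `R`-module `M`, given by `(r • f) m = f (r • m)`. -/
instance charModuleModule (R : Type) [Ring R] (M : Type) [AddCommGroup M] [Module R M] :
    Module Rᵐᵒᵖ (CharacterModule M) where
  smul r f := (f : M →+ AddCircle (1:ℚ)).comp (DistribMulAction.toAddMonoidHom M r.unop)
  one_smul f := AddMonoidHom.ext (fun x => by
    show f ((1 : R) • x) = f x
    rw [one_smul])
  mul_smul r s f := AddMonoidHom.ext (fun x => by
    show f ((r * s).unop • x) = f (s.unop • r.unop • x)
    rw [MulOpposite.unop_mul, mul_smul])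
  smul_zero r := rfl
  smul_add r f g := rfl
  add_smul r s f := AddMonoidHom.ext (fun x => by
    show f ((r + s).unop • x) = f (r.unop • x) + f (s.unop • x)
    rw [MulOpposite.unop_add, add_smul, map_add])
  zero_smul f := AddMonoidHom.ext (fun x => by
    show f ((0 : R) • x) = 0
    rw [zero_smul, map_zero])

/-- A left module over an arbitrary ring is flat iff its character module (Pontryagin dual)
is an injective right module (Lambek's criterion); over a noncommutative ring we take this
as the definition of flatness. -/
def ModuleFlat (R : Type) [Ring R] (M : ModuleCat R) : Prop :=
  Module.Injective Rᵐᵒᵖ (CharacterModule M)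

open scoped TensorProduct

theorem CharacterModule.exists_apply_eq_of_ker_le {T A : Type} [AddCommGroup T] [AddCommGroup A]
    (α : T →ₗ[ℤ] A) (β : T →ₗ[ℤ] AddCircle (1 : ℚ)) (h : LinearMap.ker α ≤ LinearMap.ker β) :
    ∃ c : CharacterModule A, ∀ t, c (α t) = β t :=
  have ⟨c, hc⟩ := (Module.Baer.of_divisible _).extension_property_addMonoidHom
    (QuotientAddGroup.kerLift α.toAddMonoidHom) (QuotientAddGroup.kerLift_injective _)
    (QuotientAddGroup.lift _ β.toAddMonoidHom fun _ ht => h ht)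
  ⟨c, fun t => DFunLike.congr_fun hc (t : T ⧸ α.toAddMonoidHom.ker)⟩

namespace ModuleFlat

variable {R : Type} [Ring R]

theorem iff_forall_exists_character (M : ModuleCat R) :
    ModuleFlat R M ↔ ∀ (I : Ideal Rᵐᵒᵖ) (f : I →ₗ[Rᵐᵒᵖ] CharacterModule M),
      ∃ c : CharacterModule M, ∀ (x : I) (m : M), f x m = c ((x : Rᵐᵒᵖ).unop • m) := by
  constructor
  · intro hM I f
    obtain ⟨g, hg⟩ := Module.Baer.of_injective hM I f
    refine ⟨g 1, fun x m => ?_⟩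
    have hgx : g x = (x : Rᵐᵒᵖ) • g 1 := by rw [← map_smul, smul_eq_mul, mul_one]
    rw [← hg, hgx]
    rfl
  · intro hM
    refine Module.Baer.injective fun I f => ?_
    obtain ⟨c, hc⟩ := hM I f
    exact ⟨LinearMap.toSpanSingleton _ _ c, fun x hx =>
      DFunLike.ext _ _ fun m => (hc ⟨x, hx⟩ m).symm⟩

theorem exists_character_of_sum_eq_zero {M : ModuleCat R} {I : Ideal Rᵐᵒᵖ}
    (f : I →ₗ[Rᵐᵒᵖ] CharacterModule M)
    (hf : ∀ s : Finset (I × M), ∑ p ∈ s, (p.1 : Rᵐᵒᵖ).unop • p.2 = 0 → ∑ p ∈ s, f p.1 p.2 = 0) :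
    ∃ c : CharacterModule M, ∀ (x : I) (m : M), f x m = c ((x : Rᵐᵒᵖ).unop • m) := by
  let α : I ⊗[ℤ] M →ₗ[ℤ] M := TensorProduct.lift <|
    LinearMap.mk₂ ℤ (fun (x : I) (m : M) => (x : Rᵐᵒᵖ).unop • m)
      (fun x y m => by simp only [Submodule.coe_add, MulOpposite.unop_add, add_smul])
      (fun c x m => by rw [Submodule.coe_smul_of_tower, MulOpposite.unop_smul, smul_assoc])
      (fun x m n => smul_add _ m n) (fun c x m => smul_comm _ c m)
  let β : I ⊗[ℤ] M →ₗ[ℤ] AddCircle (1 : ℚ) := TensorProduct.lift <|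
    LinearMap.mk₂ ℤ (fun (x : I) (m : M) => f x m)
      (fun x y m => by rw [map_add]; rfl) (fun c x m => by rw [map_zsmul]; rfl)
      (fun x m n => map_add _ m n) (fun c x m => map_zsmul _ c m)
  have hker : LinearMap.ker α ≤ LinearMap.ker β := by
    intro t ht
    obtain ⟨s, rfl⟩ := TensorProduct.exists_finset t
    rw [LinearMap.mem_ker, map_sum] at ht ⊢
    exact hf s ht
  obtain ⟨c, hc⟩ := CharacterModule.exists_apply_eq_of_ker_le α β hker
  exact ⟨c, fun x m => (hc (x ⊗ₜ m)).symm⟩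

theorem exists_character_of_restrictScalars {S : Type} [Ring S] (φ : S →+* R) {M : ModuleCat R}
    (hM : ModuleFlat S ((ModuleCat.restrictScalars φ).obj M)) {I : Ideal Rᵐᵒᵖ}
    (f : I →ₗ[Rᵐᵒᵖ] CharacterModule M) :
    ∃ c : CharacterModule M, ∀ x : I, (x : Rᵐᵒᵖ).unop ∈ φ.range →
      ∀ m : M, f x m = c ((x : Rᵐᵒᵖ).unop • m) := by
  let J := I.comap (RingHom.op φ)
  let j : J →ₛₗ[RingHom.op φ] I :=
    ((RingHom.op φ).toSemilinearMap.domRestrict J).codRestrict I fun y => y.2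
  -- `Sᵐᵒᵖ` acts on the character module of the restriction through `φ`, definitionally.
  let f' : J →ₗ[Sᵐᵒᵖ] CharacterModule ((ModuleCat.restrictScalars φ).obj M) :=
    { toAddHom := (f.comp j).toAddHom, map_smul' := (f.comp j).map_smulₛₗ }
  obtain ⟨c, hc⟩ := (iff_forall_exists_character _).mp hM J f'
  refine ⟨c, fun x ⟨y, hy⟩ m => ?_⟩
  have hyJ : MulOpposite.op y ∈ J := show MulOpposite.op (φ y) ∈ I from hy ▸ x.2
  have hjy : j ⟨MulOpposite.op y, hyJ⟩ = x := Subtype.ext (MulOpposite.unop_injective hy)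
  rw [← hjy]
  exact hc ⟨MulOpposite.op y, hyJ⟩ m

end ModuleFlat

theorem MonoidAlgebra.exists_fg_forall_mem_range_mapDomainRingHom {k G : Type} [Ring k]
    [Group G] (s : Finset (MonoidAlgebra k G)) :
    ∃ H : Subgroup G, H.FG ∧ ∀ x ∈ s, x ∈ (mapDomainRingHom k H.subtype).range := by
  classical
  refine ⟨Subgroup.closure (s.biUnion fun x => x.coeff.support : Set G), ⟨_, rfl⟩, fun x hx => ?_⟩
  refine ⟨comapDomain _ Subtype.val_injective x, mapDomain_comapDomain (fun g hg => ?_) _⟩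
  exact ⟨⟨g, Subgroup.subset_closure (Finset.mem_biUnion.2 ⟨x, hx, hg⟩)⟩, rfl⟩

/-- If the restriction of a `kG`-module `M` to every finitely generated subgroup `S' ≤ G` is
flat over `kS'`, then `M` is flat over `kG`. -/
theorem statement13 (k : Type) [CommRing k] (G : Type) [Group G]
    (M : ModuleCat (MonoidAlgebra k G))
    (h : ∀ S' : Subgroup G, S'.FG → ModuleFlat (MonoidAlgebra k S')
      ((ModuleCat.restrictScalars (MonoidAlgebra.mapDomainRingHom k S'.subtype)).obj M)) :
    ModuleFlat (MonoidAlgebra k G) M := by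
  classical
  refine (ModuleFlat.iff_forall_exists_character M).mpr fun I f => ?_
  refine ModuleFlat.exists_character_of_sum_eq_zero f fun s hs => ?_
  obtain ⟨H, hH, hsH⟩ := MonoidAlgebra.exists_fg_forall_mem_range_mapDomainRingHom
    (s.image fun p => (p.1 : (MonoidAlgebra k G)ᵐᵒᵖ).unop)
  obtain ⟨c, hc⟩ := ModuleFlat.exists_character_of_restrictScalars _ (h H hH) f
  calc ∑ p ∈ s, f p.1 p.2
      = ∑ p ∈ s, c ((p.1 : (MonoidAlgebra k G)ᵐᵒᵖ).unop • p.2) :=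
        Finset.sum_congr rfl fun p hp => hc p.1 (hsH _ (Finset.mem_image_of_mem _ hp)) p.2
    _ = 0 := by rw [← map_sum, hs, map_zero]

end
end
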